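/- Let P be a finite p-group with γ_{l(p-1)}(P) ≤ γ_r(P)^{p^s} for some integers r, s with l(p-1) < r + s(p-1). Then γ_{l(p-1)}(P) ≤ E_{l(p-1)+1, 1}(P). -/

import Mathlib

open Subgroup

/-- The subgroup generated by the `n`-th powers of the elements of `H`
(for `n = p` this is the subgroup usually denoted `H^p`). -/
def pPow {G : Type*} [Group G] (n : ℕ) (H : Subgroup G) : Subgroup G :=
  Subgroup.closure ((fun x => x ^ n) '' (H : Set G))

/-- Iterated commutator subgroup `[N,_m P] = [N, P, P, ..., P]` with `P` repeated `m` times. -/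
def itComm {G : Type*} [Group G] (N P : Subgroup G) : ℕ → Subgroup G
  | 0 => N
  | (m + 1) => ⁅itComm N P m, P⁆

/-- Iterated commutator element `[v, g, g, ..., g]` (`g` repeated `m` times),
with the convention `[v, g] = v⁻¹ g⁻¹ v g`. -/
def itCommElem {G : Type*} [Group G] (v g : G) : ℕ → G
  | 0 => v
  | (m + 1) => (itCommElem v g m)⁻¹ * g⁻¹ * itCommElem v g m * g

theorem normal_biSup {G : Type*} [Group G] (S : Set (Subgroup G))
    (h : ∀ N ∈ S, N.Normal) : (⨆ N ∈ S, N).Normal := by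
  constructor
  intro x hx g
  rw [iSup_subtype'] at hx ⊢
  refine Subgroup.iSup_induction (G := G) (fun N : S => (N : Subgroup G))
    (C := fun y => g * y * g⁻¹ ∈ ⨆ N : S, (N : Subgroup G)) hx
    (fun N y hy => Subgroup.mem_iSup_of_mem N ((h N N.2).conj_mem y hy g))
    (by simpa using Subgroup.one_mem _) ?_
  intro a b ha hb
  have : g * (a * b) * g⁻¹ = (g * a * g⁻¹) * (g * b * g⁻¹) := by group
  rw [this]; exact Subgroup.mul_mem _ ha hb

/-- `O_p(G)`, the largest normal `p`-subgroup of `G`. -/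
def Op (p : ℕ) (G : Type*) [Group G] : Subgroup G :=
  ⨆ N ∈ {N : Subgroup G | N.Normal ∧ IsPGroup p N}, N

/-- `O_{p'}(G)`, the largest normal `p'`-subgroup of `G`. -/
def Op' (p : ℕ) (G : Type*) [Group G] : Subgroup G :=
  ⨆ N ∈ {N : Subgroup G | N.Normal ∧ (Nat.card N).Coprime p}, N

instance OpNormal (p : ℕ) (G : Type*) [Group G] : (Op p G).Normal :=
  normal_biSup _ (fun _ h => h.1)

instance Op'Normal (p : ℕ) (G : Type*) [Group G] : (Op' p G).Normal :=
  normal_biSup _ (fun _ h => h.1)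

/-- `O_{p',p}(G)`: the preimage in `G` of `O_p(G / O_{p'}(G))`. -/
def Opp (p : ℕ) (G : Type*) [Group G] : Subgroup G :=
  (Op p (G ⧸ Op' p G)).comap (QuotientGroup.mk' (Op' p G))

instance OppNormal (p : ℕ) (G : Type*) [Group G] : (Opp p G).Normal :=
  Subgroup.Normal.comap (OpNormal p _) _

/-- `G` is `p`-solvable: it admits a subnormal series each of whose factors is
a `p`-group or a `p'`-group (expressed via relative indices of consecutive terms). -/
def IsPSolvable (p : ℕ) (G : Type*) [Group G] : Prop :=
  ∃ (n : ℕ) (c : ℕ → Subgroup G), c 0 = ⊥ ∧ c n = ⊤ ∧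
    ∀ i < n, c i ≤ c (i + 1) ∧
      (∀ g ∈ c (i + 1), ∀ x ∈ c i, g * x * g⁻¹ ∈ c i) ∧
      ((∃ m, (c i).relIndex (c (i + 1)) = p ^ m) ∨ ((c i).relIndex (c (i + 1))).Coprime p)

universe u

/-- `pLengthLe p n G` means the `p`-length of `G` is at most `n`:
`p`-length `≤ 0` iff `G` is a `p'`-group, and
`p`-length of `G` `≤ n+1` iff the `p`-length of `G / O_{p',p}(G)` is `≤ n`. -/
def pLengthLe (p : ℕ) : ℕ → (G : Type u) → [inst : Group G] → Prop
  | 0, G, _ => (Nat.card G).Coprime p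
  | (n + 1), G, _ => pLengthLe p n (G ⧸ Opp p G)

/-- `γ_i(P)`, the lower central series with the convention `γ_1(P) = P`. -/
def gamma (P : Type*) [Group P] (i : ℕ) : Subgroup P :=
  Subgroup.lowerCentralSeries (⊤ : Subgroup P) (i - 1)

/-- `E_{k,r}(P) = ∏_{i + j(p-1) ≥ k, i ≥ r} γ_i(P)^{p^j}`. -/
def Ekr (p k r : ℕ) (P : Type*) [Group P] : Subgroup P :=
  ⨆ (i : ℕ) (j : ℕ) (_ : k ≤ i + j * (p - 1) ∧ r ≤ i), pPow (p ^ j) (gamma P i)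

/-- A potent filtration of type `l` and length `k` of the `p`-group `P`:
a descending chain of normal subgroups `N 0 ⊇ N 1 ⊇ ... ⊇ N k = 1` with
`[N i, P] ≤ N (i+1)` and `[N i,_l P] ≤ (N (i+1))^p` for all `i < k`. -/
def IsPotentFiltration (p l k : ℕ) {P : Type*} [Group P] (N : ℕ → Subgroup P) : Prop :=
  (∀ i, (N i).Normal) ∧ (∀ i j, i ≤ j → N j ≤ N i) ∧ N k = ⊥ ∧
  (∀ i < k, ⁅N i, (⊤ : Subgroup P)⁆ ≤ N (i + 1)) ∧
  (∀ i < k, itComm (N i) ⊤ l ≤ pPow p (N (i + 1)))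

/-- `N` is PF-embedded of type `l` in the subgroup `P` of `G`: there is a potent
filtration of type `l` of `P` starting at `N`. -/
def IsPFEmbedded (p l : ℕ) {G : Type*} [Group G] (N P : Subgroup G) : Prop :=
  ∃ (k : ℕ) (Nf : ℕ → Subgroup G), Nf 0 = N ∧ Nf k = ⊥ ∧
    (∀ i, Nf i ≤ P) ∧
    (∀ i, ∀ g ∈ P, ∀ x ∈ Nf i, g * x * g⁻¹ ∈ Nf i) ∧
    (∀ i, Nf (i + 1) ≤ Nf i) ∧
    (∀ i < k, ⁅Nf i, P⁆ ≤ Nf (i + 1)) ∧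
    (∀ i < k, itComm (Nf i) P l ≤ pPow p (Nf (i + 1)))

theorem pPow_gamma_le_Ekr {p k r i j : ℕ} (P : Type*) [Group P]
    (hk : k ≤ i + j * (p - 1)) (hr : r ≤ i) : pPow (p ^ j) (gamma P i) ≤ Ekr p k r P :=
  le_iSup_of_le i (le_iSup_of_le j (le_iSup_of_le ⟨hk, hr⟩ le_rfl))

theorem pPow_gamma_le_Ekr_one {p k i j : ℕ} (P : Type*) [Group P]
    (hk : k ≤ i + j * (p - 1)) : pPow (p ^ j) (gamma P i) ≤ Ekr p k 1 P := by
  cases i with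
  | zero =>
    -- `gamma P 0 = gamma P 1` because of the truncated subtraction `i - 1` in `gamma`
    exact pPow_gamma_le_Ekr (i := 1) P (by omega) le_rfl
  | succ i => exact pPow_gamma_le_Ekr P hk (by omega)

theorem stmt_13_general (p l r s : ℕ) (P : Type*) [Group P]
    (h : gamma P (l * (p - 1)) ≤ pPow (p ^ s) (gamma P r))
    (hlt : l * (p - 1) < r + s * (p - 1)) :
    gamma P (l * (p - 1)) ≤ Ekr p (l * (p - 1) + 1) 1 P :=
  h.trans (pPow_gamma_le_Ekr_one P hlt)

/-- if `γ_{l(p-1)}(P) ≤ γ_r(P)^{p^s}` with `l(p-1) < r + s(p-1)`, then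
`γ_{l(p-1)}(P) ≤ E_{l(p-1)+1,1}(P)`. -/
theorem stmt_13 (p l r s : ℕ) (hp : p.Prime) (P : Type*) [Group P] [Finite P]
    (hP : IsPGroup p P)
    (h : gamma P (l * (p - 1)) ≤ pPow (p ^ s) (gamma P r))
    (hlt : l * (p - 1) < r + s * (p - 1)) :
    gamma P (l * (p - 1)) ≤ Ekr p (l * (p - 1) + 1) 1 P :=
  stmt_13_general p l r s P h hlt
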